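/- Let f be a Rogers function and ζ ∈ ℂ with Re ζ > 0. Then the function g(ξ) = (ξ² / ((ξ − ζ)(ξ + conj(ζ)))) · ( f(ξ) − Re f(ζ) − ((iξ + Im ζ)/Re ζ)·Im f(ζ) ), defined for ξ in the right half-plane with ξ ≠ ζ and extended continuously (holomorphically) at ξ = ζ, is a Rogers function. -/

import Mathlib

/-- A Rogers function: holomorphic on the right half-plane `{Re ξ > 0}` with
`Re(f(ξ)/ξ) ≥ 0` there. -/
def IsRogers (f : ℂ → ℂ) : Prop :=
  DifferentiableOn ℂ f {ξ : ℂ | 0 < ξ.re} ∧ ∀ ξ : ℂ, 0 < ξ.re → 0 ≤ (f ξ / ξ).re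

/-!
Write `φ(ξ) = f(ξ)/ξ`, so that `Re φ ≥ 0` on the right half-plane, and `w = φ(ζ)`. Then
`g(ξ)/ξ = ξ²(φ(ξ) - w)/((ξ - ζ)(ξ + conj ζ)) + (Re w / Re ζ) · ξ conj ζ/(ξ + conj ζ)`.
After replacing `φ` by `φ + δ` (so that `Re w > 0`; let `δ → 0` at the end), the Schwarz–Pick
lemma for the half-plane gives `s` with `‖s‖ ≤ 1` and `κ_w(φ ξ) = s · κ_ζ(ξ)`, where
`κ_p(z) = (z - p)/(z + conj p)` maps the half-plane onto the disc. Eliminating `φ ξ`,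
`g(ξ)/ξ = (Re w / Re ζ) · ξ A/(ξ(1 - s) + A)` with `A = conj ζ + ζ s`, and
`Re (ξ A · conj (ξ(1 - s) + A)) = |ξ|² Re ζ (1 - |s|²) + |A|² Re ξ ≥ 0`.
-/

open Complex Set Metric ComplexConjugate Filter Topology

noncomputable def cayleyAt (p z : ℂ) : ℂ := (z - p) / (z + conj p)

noncomputable def cayleyAtInv (p z : ℂ) : ℂ := (p + conj p * z) / (1 - z)

noncomputable def rogersNumerator (f : ℂ → ℂ) (ζ ξ : ℂ) : ℂ :=
  f ξ - ((f ζ).re : ℂ) - ((I * ξ + (ζ.im : ℂ)) / (ζ.re : ℂ)) * ((f ζ).im : ℂ)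

lemma add_conj_ne_zero {z p : ℂ} (hz : 0 < z.re) (hp : 0 < p.re) : z + conj p ≠ 0 := by
  intro h
  have := congrArg re h
  simp only [add_re, conj_re, zero_re] at this
  linarith

lemma norm_cayleyAt_lt_one {p z : ℂ} (hz : 0 < z.re) (hp : 0 < p.re) :
    ‖cayleyAt p z‖ < 1 := by
  rw [cayleyAt, norm_div, div_lt_one (norm_pos_iff.mpr (add_conj_ne_zero hz hp))]
  refine lt_of_pow_lt_pow_left₀ 2 (norm_nonneg _) ?_
  rw [Complex.sq_norm, Complex.sq_norm]
  simp only [normSq_apply, sub_re, sub_im, add_re, add_im, conj_re, conj_im]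
  nlinarith

lemma re_div_eq_re_mul_conj_div (z w : ℂ) : (z / w).re = (z * conj w).re / normSq w := by
  rw [div_re, ← add_div, mul_re, conj_re, conj_im]
  ring

lemma re_cayleyAtInv_pos {p z : ℂ} (hp : 0 < p.re) (hz : ‖z‖ < 1) :
    0 < (cayleyAtInv p z).re := by
  have h1 : 1 - z ≠ 0 := fun h => by simp [← sub_eq_zero.mp h] at hz
  have hz2 : normSq z < 1 := by
    rw [Complex.normSq_eq_norm_sq]
    exact pow_lt_one₀ (norm_nonneg z) hz two_ne_zero
  have key : ((p + conj p * z) * conj (1 - z)).re = p.re * (1 - normSq z) := by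
    simp only [normSq_apply, add_re, add_im, mul_re, mul_im, conj_re, conj_im, sub_re, sub_im,
      one_re, one_im]
    ring
  rw [cayleyAtInv, re_div_eq_re_mul_conj_div, key]
  exact div_pos (mul_pos hp (by linarith)) (normSq_pos.mpr h1)

lemma cayleyAtInv_cayleyAt {p z : ℂ} (hz : 0 < z.re) (hp : 0 < p.re) :
    cayleyAtInv p (cayleyAt p z) = z := by
  have h1 := add_conj_ne_zero hz hp
  have h2 := add_conj_ne_zero hp hp
  have hsub : 1 - cayleyAt p z = (p + conj p) / (z + conj p) := by
    rw [cayleyAt]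
    field_simp
    ring
  rw [cayleyAtInv, hsub, cayleyAt]
  field_simp
  ring

lemma differentiableOn_cayleyAt {p : ℂ} (hp : 0 < p.re) :
    DifferentiableOn ℂ (cayleyAt p) {z | 0 < z.re} :=
  (differentiableOn_id.sub_const p).div (differentiableOn_id.add_const _)
    fun _ hz => add_conj_ne_zero hz hp

lemma differentiableOn_cayleyAtInv (p : ℂ) : DifferentiableOn ℂ (cayleyAtInv p) (ball 0 1) := by
  refine ((differentiableOn_id.const_mul _).const_add _).div
    ((differentiableOn_const 1).sub differentiableOn_id) fun z hz h => ?_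
  rw [mem_ball_zero_iff, ← sub_eq_zero.mp h] at hz
  simp at hz

theorem norm_cayleyAt_le_norm_cayleyAt {F : ℂ → ℂ} (hF : DifferentiableOn ℂ F {z | 0 < z.re})
    (hFre : ∀ z, 0 < z.re → 0 < (F z).re) {ζ ξ : ℂ} (hζ : 0 < ζ.re) (hξ : 0 < ξ.re) :
    ‖cayleyAt (F ζ) (F ξ)‖ ≤ ‖cayleyAt ζ ξ‖ := by
  have hInv : MapsTo (cayleyAtInv ζ) (ball 0 1) {z | 0 < z.re} :=
    fun z hz => re_cayleyAtInv_pos hζ (mem_ball_zero_iff.mp hz)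
  have hd : DifferentiableOn ℂ (cayleyAt (F ζ) ∘ F ∘ cayleyAtInv ζ) (ball 0 1) :=
    ((differentiableOn_cayleyAt (hFre ζ hζ)).comp hF fun z hz => hFre z hz).comp
      (differentiableOn_cayleyAtInv ζ) hInv
  have hmaps : MapsTo (cayleyAt (F ζ) ∘ F ∘ cayleyAtInv ζ) (ball 0 1) (closedBall 0 1) :=
    fun z hz => mem_closedBall_zero_iff.mpr
      (norm_cayleyAt_lt_one (hFre _ (hInv hz)) (hFre ζ hζ)).le
  have h0 : (cayleyAt (F ζ) ∘ F ∘ cayleyAtInv ζ) 0 = 0 := by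
    simp [cayleyAt, cayleyAtInv]
  simpa [cayleyAtInv_cayleyAt hξ hζ] using
    Complex.norm_le_norm_of_mapsTo_ball hd hmaps h0 (norm_cayleyAt_lt_one hξ hζ)

lemma re_mul_div_nonneg_of_norm_le_one {ξ ζ s : ℂ} (hξ : 0 < ξ.re) (hζ : 0 < ζ.re) (hs : ‖s‖ ≤ 1) :
    0 ≤ (ξ * (conj ζ + ζ * s) / (ξ * (1 - s) + conj ζ + ζ * s)).re := by
  have hs2 : 0 ≤ 1 - normSq s := by
    rw [Complex.normSq_eq_norm_sq, sub_nonneg]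
    exact pow_le_one₀ (norm_nonneg s) hs
  have key : (ξ * (conj ζ + ζ * s) * conj (ξ * (1 - s) + conj ζ + ζ * s)).re
      = normSq ξ * ζ.re * (1 - normSq s) + normSq (conj ζ + ζ * s) * ξ.re := by
    simp only [normSq_apply, add_re, add_im, mul_re, mul_im, conj_re, conj_im, sub_re, sub_im,
      one_re, one_im]
    ring
  rw [re_div_eq_re_mul_conj_div, key]
  have := normSq_nonneg ξ
  have := normSq_nonneg (conj ζ + ζ * s)
  have := normSq_nonneg (ξ * (1 - s) + conj ζ + ζ * s)
  positivity

lemma eq_ofReal_mul_of_cayleyAt_rel {ξ ζ v w s : ℂ} (hξ : 0 < ξ.re) (hζ : 0 < ζ.re) (hw : 0 < w.re)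
    (hξζ : ξ ≠ ζ)
    (hrel : (v - w) * (ξ * (1 - s) + conj ζ + ζ * s) = (ξ - ζ) * s * (2 * w.re)) :
    ξ ^ 2 * (v - w) / ((ξ - ζ) * (ξ + conj ζ)) + (w.re / ζ.re : ℝ) * (ξ * conj ζ / (ξ + conj ζ))
      = (w.re / ζ.re : ℝ) * (ξ * (conj ζ + ζ * s) / (ξ * (1 - s) + conj ζ + ζ * s)) := by
  have h1 : ξ - ζ ≠ 0 := sub_ne_zero.mpr hξζ
  have h2 := add_conj_ne_zero hξ hζ
  have hE : ξ * (1 - s) + conj ζ + ζ * s ≠ 0 := by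
    intro hE
    rw [hE, mul_zero, eq_comm] at hrel
    have hs : s = 0 := by simpa [h1, hw.ne'] using hrel
    simp only [hs, sub_zero, mul_one, mul_zero, add_zero] at hE
    exact h2 hE
  have hζ' : (ζ.re : ℂ) ≠ 0 := ofReal_ne_zero.mpr hζ.ne'
  have hζc : ζ + conj ζ = 2 * ζ.re := by rw [add_conj]; push_cast; ring
  push_cast
  field_simp
  linear_combination ξ ^ 2 * ζ.re * hrel - ξ ^ 2 * (ξ - ζ) * w.re * s * hζc

lemma re_nonneg_of_norm_cayleyAt_le {ξ ζ v w : ℂ} (hξ : 0 < ξ.re) (hζ : 0 < ζ.re) (hv : 0 < v.re)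
    (hw : 0 < w.re) (hξζ : ξ ≠ ζ) (h : ‖cayleyAt w v‖ ≤ ‖cayleyAt ζ ξ‖) :
    0 ≤ (ξ ^ 2 * (v - w) / ((ξ - ζ) * (ξ + conj ζ))
      + (w.re / ζ.re : ℝ) * (ξ * conj ζ / (ξ + conj ζ))).re := by
  have hρ : cayleyAt ζ ξ ≠ 0 := div_ne_zero (sub_ne_zero.mpr hξζ) (add_conj_ne_zero hξ hζ)
  obtain ⟨s, hs_def⟩ : ∃ s, s = cayleyAt w v / cayleyAt ζ ξ := ⟨_, rfl⟩
  have hs : ‖s‖ ≤ 1 := by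
    rw [hs_def, norm_div]
    exact div_le_one_of_le₀ h (norm_nonneg _)
  have hrel : (v - w) * (ξ * (1 - s) + conj ζ + ζ * s) = (ξ - ζ) * s * (2 * w.re) := by
    have hw2 : w + conj w = 2 * w.re := by rw [add_conj]; push_cast; ring
    have hcross : (v - w) * (ξ + conj ζ) = s * (ξ - ζ) * (v + conj w) := by
      rw [hs_def, cayleyAt, cayleyAt]
      field_simp [add_conj_ne_zero hv hw, add_conj_ne_zero hξ hζ, sub_ne_zero.mpr hξζ]
    linear_combination hcross + (ξ - ζ) * s * hw2
  rw [eq_ofReal_mul_of_cayleyAt_rel hξ hζ hw hξζ hrel, re_ofReal_mul]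
  exact mul_nonneg (div_nonneg hw.le hζ.le) (re_mul_div_nonneg_of_norm_le_one hξ hζ hs)

lemma rogersNumerator_eq (f : ℂ → ℂ) {ζ : ℂ} (hζ : 0 < ζ.re) (ξ : ℂ) :
    rogersNumerator f ζ ξ
      = f ξ - ξ * (f ζ / ζ) + (ξ - ζ) * ((f ζ / ζ).re / ζ.re : ℝ) * conj ζ := by
  have hζ0 : ζ ≠ 0 := fun h => by simp [h] at hζ
  obtain ⟨w, hw⟩ : ∃ w, f ζ = ζ * w := ⟨f ζ / ζ, (mul_div_cancel₀ _ hζ0).symm⟩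
  rw [rogersNumerator, hw, mul_div_cancel_left₀ _ hζ0]
  have : ζ.re ≠ 0 := hζ.ne'
  apply Complex.ext <;>
    simp only [sub_re, sub_im, add_re, add_im, mul_re, mul_im, normSq_ofReal,
      ofReal_re, ofReal_im, I_re, I_im, conj_re, conj_im, div_re, div_im] <;>
    field_simp <;> ring

lemma rogersNumerator_self (f : ℂ → ℂ) {ζ : ℂ} (hζ : 0 < ζ.re) : rogersNumerator f ζ ζ = 0 := by
  simp [rogersNumerator_eq f hζ, mul_div_cancel₀ _ (fun h : ζ = 0 => by simp [h] at hζ)]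

lemma differentiableOn_rogersNumerator {f : ℂ → ℂ} (hf : DifferentiableOn ℂ f {ξ | 0 < ξ.re})
    (ζ : ℂ) : DifferentiableOn ℂ (rogersNumerator f ζ) {ξ | 0 < ξ.re} := by
  unfold rogersNumerator
  fun_prop

lemma re_nonneg_of_isRogers {f : ℂ → ℂ} (hf : IsRogers f) {ξ ζ : ℂ} (hξ : 0 < ξ.re)
    (hζ : 0 < ζ.re) (hξζ : ξ ≠ ζ) :
    0 ≤ (ξ ^ 2 * (f ξ / ξ - f ζ / ζ) / ((ξ - ζ) * (ξ + conj ζ))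
      + ((f ζ / ζ).re / ζ.re : ℝ) * (ξ * conj ζ / (ξ + conj ζ))).re := by
  set φ : ℂ → ℂ := fun z => f z / z
  have hφ : DifferentiableOn ℂ φ {z | 0 < z.re} :=
    hf.1.div differentiableOn_id fun z hz h => by simp [h] at hz
  let Ψ : ℝ → ℝ := fun δ => (ξ ^ 2 * ((φ ξ + δ) - (φ ζ + δ)) / ((ξ - ζ) * (ξ + conj ζ))
      + ((φ ζ + δ).re / ζ.re : ℝ) * (ξ * conj ζ / (ξ + conj ζ))).re
  have hΨ : ∀ δ : ℝ, 0 < δ → 0 ≤ Ψ δ := by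
    intro δ hδ
    have hre : ∀ z, 0 < z.re → 0 < (φ z + δ).re := fun z hz => by
      simpa using add_pos_of_nonneg_of_pos (hf.2 z hz) hδ
    exact re_nonneg_of_norm_cayleyAt_le hξ hζ (hre ξ hξ) (hre ζ hζ) hξζ
      (norm_cayleyAt_le_norm_cayleyAt (hφ.add_const _) hre hζ hξ)
  have hcont : Continuous Ψ := by fun_prop
  simpa [Ψ] using ge_of_tendsto ((hcont.tendsto 0).mono_left nhdsWithin_le_nhds)
    (eventually_nhdsWithin_of_forall hΨ : ∀ᶠ δ in 𝓝[>] (0 : ℝ), 0 ≤ Ψ δ)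

lemma isRogers_of_forall_ne {g : ℂ → ℂ} (ζ : ℂ) (hg : DifferentiableOn ℂ g {ξ | 0 < ξ.re})
    (hre : ∀ ξ, 0 < ξ.re → ξ ≠ ζ → 0 ≤ (g ξ / ξ).re) : IsRogers g := by
  refine ⟨hg, fun ξ hξ => ?_⟩
  obtain rfl | hξζ := eq_or_ne ξ ζ
  · have hH : {z : ℂ | 0 < z.re} ∈ 𝓝 ξ := (isOpen_lt continuous_const continuous_re).mem_nhds hξ
    have hcont : ContinuousAt (fun z => (g z / z).re) ξ :=
      continuous_re.continuousAt.comp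
        ((hg.continuousOn.continuousAt hH).div continuousAt_id fun h => by simp [h] at hξ)
    have hev : ∀ᶠ z in 𝓝[≠] ξ, 0 ≤ (g z / z).re := by
      filter_upwards [nhdsWithin_le_nhds hH, self_mem_nhdsWithin] with z hz hzξ
      exact hre z hz hzξ
    exact ge_of_tendsto (hcont.tendsto.mono_left nhdsWithin_le_nhds) hev
  · exact hre ξ hξ hξζ

/-- For a Rogers function `f` and `Re ζ > 0`, the function
`g(ξ) = (ξ²/((ξ−ζ)(ξ+conj ζ)))·(f(ξ) − Re f(ζ) − ((iξ + Im ζ)/Re ζ)·Im f(ζ))`,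
extended holomorphically at `ξ = ζ`, is a Rogers function. -/
theorem stmt_10 (f : ℂ → ℂ) (hf : IsRogers f) (ζ : ℂ) (hζ : 0 < ζ.re) :
    ∃ g : ℂ → ℂ, IsRogers g ∧
      ∀ ξ : ℂ, 0 < ξ.re → ξ ≠ ζ →
        g ξ = ξ ^ 2 / ((ξ - ζ) * (ξ + (starRingEnd ℂ) ζ)) *
          (f ξ - ((f ζ).re : ℂ) -
            ((Complex.I * ξ + (ζ.im : ℂ)) / (ζ.re : ℂ)) * ((f ζ).im : ℂ)) := by
  have hζH : {z : ℂ | 0 < z.re} ∈ 𝓝 ζ := (isOpen_lt continuous_const continuous_re).mem_nhds hζ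
  have hformula : ∀ ξ, 0 < ξ.re → ξ ≠ ζ → ξ ^ 2 * dslope (rogersNumerator f ζ) ζ ξ / (ξ + conj ζ)
      = ξ ^ 2 / ((ξ - ζ) * (ξ + conj ζ)) * rogersNumerator f ζ ξ := by
    intro ξ _ hξζ
    rw [dslope_of_ne _ hξζ, slope_def_field, rogersNumerator_self f hζ, sub_zero]
    field_simp
  refine ⟨fun ξ => ξ ^ 2 * dslope (rogersNumerator f ζ) ζ ξ / (ξ + conj ζ),
    isRogers_of_forall_ne ζ ?_ fun ξ hξ hξζ => ?_, hformula⟩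
  · exact ((differentiable_pow 2).differentiableOn.mul
      ((differentiableOn_dslope hζH).mpr (differentiableOn_rogersNumerator hf.1 ζ))).div
      (differentiableOn_id.add_const _) fun ξ hξ => add_conj_ne_zero hξ hζ
  · convert re_nonneg_of_isRogers hf hξ hζ hξζ using 2
    rw [hformula ξ hξ hξζ, rogersNumerator_eq f hζ]
    have := add_conj_ne_zero hξ hζ
    have : ξ ≠ 0 := fun h => by simp [h] at hξ
    have : ξ - ζ ≠ 0 := sub_ne_zero.mpr hξζ
    field_simp
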